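/- Let n ≥ 3 and Γ̃ = {z ∈ ℂ^{n+1} : Re z_1 > 0 and Re z_{n+1} = (Re z_1)(Re z_2) + (Re z_1) Σ_{j=3}^n (Re z_j)²}. For every u ∈ ℝ, the holomorphic map Φ_u(z) = (z_1, z_2 + iu(z_1 − 1), z_3, …, z_n, z_{n+1} + (iu/2)(z_1² − 1)) maps Γ̃ bijectively onto Γ̃ and fixes the point p₀ = (1, 0, …, 0). -/

import Mathlib

/-- The tube hypersurface `Γ̃ = {z ∈ ℂ^{n+1} : Re z₁ > 0,
Re z_{n+1} = (Re z₁)(Re z₂) + (Re z₁) Σ_{j=3}^n (Re z_j)²}` (0-indexed coordinates). -/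
def tubeGamma (n : ℕ) (hn : 3 ≤ n) : Set (Fin (n + 1) → ℂ) :=
  {z | 0 < (z 0).re ∧ (z (Fin.last n)).re = (z 0).re * (z ⟨1, by omega⟩).re +
    (z 0).re * ∑ j : Fin (n + 1), (if 2 ≤ (j : ℕ) ∧ (j : ℕ) < n then (z j).re ^ 2 else 0)}

/-- The holomorphic map `Φ_u(z) = (z₁, z₂ + iu(z₁ − 1), z₃, …, z_n,
z_{n+1} + (iu/2)(z₁² − 1))`. -/
noncomputable def PhiU (n : ℕ) (u : ℝ) (z : Fin (n + 1) → ℂ) : Fin (n + 1) → ℂ := fun i =>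
  if (i : ℕ) = 1 then z i + Complex.I * (u : ℂ) * (z 0 - 1)
  else if (i : ℕ) = n then z i + (Complex.I * (u : ℂ) / 2) * ((z 0) ^ 2 - 1)
  else z i

/-! `Φ_u` fixes `z₁, z₃, …, z_n` and lowers `Re z₂` by `u Im z₁` and `Re z_{n+1}` by
`u Re z₁ Im z₁`, so both sides of the equation of `Γ̃` drop by `u Re z₁ Im z₁` and `Γ̃` is
preserved. Since `z₁` is fixed, the shifts add up: `Φ_u ∘ Φ_v = Φ_{u+v}`, so `Φ_{-u}` inverts `Φ_u`. -/

open Complex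

theorem re_add_I_mul_ofReal_mul (w c : ℂ) (u : ℝ) : (w + I * u * c).re = w.re - u * c.im := by
  rw [add_re, mul_assoc, I_mul_re, im_ofReal_mul, sub_eq_add_neg]

section PhiU

variable {n : ℕ} (u : ℝ) (z : Fin (n + 1) → ℂ)

theorem PhiU_apply_zero (hn : n ≠ 0) : PhiU n u z 0 = z 0 := by
  simp [PhiU, Ne.symm hn]

theorem PhiU_apply_one (h1 : 1 < n + 1) :
    PhiU n u z ⟨1, h1⟩ = z ⟨1, h1⟩ + I * u * (z 0 - 1) := by
  simp [PhiU]

theorem PhiU_apply_last (hn : n ≠ 1) :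
    PhiU n u z (Fin.last n) = z (Fin.last n) + I * u / 2 * (z 0 ^ 2 - 1) := by
  simp [PhiU, hn]

theorem PhiU_apply_of_ne {i : Fin (n + 1)} (h1 : (i : ℕ) ≠ 1) (hn : (i : ℕ) ≠ n) :
    PhiU n u z i = z i := by
  simp [PhiU, h1, hn]

theorem PhiU_eq_self_of_apply_zero_eq_one (h : z 0 = 1) : PhiU n u z = z := by
  funext i
  simp [PhiU, h]

theorem PhiU_zero : PhiU n 0 z = z := by
  funext i
  simp [PhiU]

theorem PhiU_PhiU (hn : n ≠ 0) (v : ℝ) : PhiU n u (PhiU n v z) = PhiU n (u + v) z := by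
  funext i
  rw [PhiU.eq_1 n u, PhiU_apply_zero v z hn]
  unfold PhiU
  split_ifs <;> push_cast <;> ring

theorem PhiU_neg_PhiU (hn : n ≠ 0) : PhiU n (-u) (PhiU n u z) = z := by
  rw [PhiU_PhiU _ _ hn, neg_add_cancel, PhiU_zero]

end PhiU

theorem PhiU_mapsTo_tubeGamma (n : ℕ) (hn : 3 ≤ n) (u : ℝ) :
    Set.MapsTo (PhiU n u) (tubeGamma n hn) (tubeGamma n hn) := by
  rintro z ⟨hpos, heq⟩
  have h0 := PhiU_apply_zero u z (by omega)
  have hsum : ∑ j : Fin (n + 1),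
      (if 2 ≤ (j : ℕ) ∧ (j : ℕ) < n then (PhiU n u z j).re ^ 2 else 0) =
      ∑ j : Fin (n + 1), (if 2 ≤ (j : ℕ) ∧ (j : ℕ) < n then (z j).re ^ 2 else 0) :=
    Finset.sum_congr rfl fun j _ => by
      split_ifs with hj
      · rw [PhiU_apply_of_ne u z (by omega) (by omega)]
      · rfl
  have hre1 : (PhiU n u z ⟨1, by omega⟩).re = (z ⟨1, by omega⟩).re - u * (z 0).im := by
    rw [PhiU_apply_one, re_add_I_mul_ofReal_mul, sub_im, one_im, sub_zero]
  have hreLast : (PhiU n u z (Fin.last n)).re =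
      (z (Fin.last n)).re - u * ((z 0).re * (z 0).im) := by
    rw [PhiU_apply_last u z (by omega), div_mul_eq_mul_div, mul_div_assoc, re_add_I_mul_ofReal_mul,
      div_ofNat_im, sub_im, one_im, sub_zero, pow_two, mul_im]
    ring
  refine ⟨h0 ▸ hpos, ?_⟩
  rw [hsum, hre1, hreLast, h0, heq]
  ring

/-- For every `u ∈ ℝ`, `Φ_u` maps `Γ̃` bijectively onto `Γ̃` and fixes `p₀ = (1, 0, …, 0)`. -/
theorem PhiU_bijOn_tubeGamma (n : ℕ) (hn : 3 ≤ n) (u : ℝ) :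
    Set.BijOn (PhiU n u) (tubeGamma n hn) (tubeGamma n hn) ∧
    PhiU n u (fun i => if (i : ℕ) = 0 then 1 else 0) =
      (fun i : Fin (n + 1) => if (i : ℕ) = 0 then (1 : ℂ) else 0) := by
  have hn0 : n ≠ 0 := by omega
  have hinv : Set.InvOn (PhiU n (-u)) (PhiU n u) (tubeGamma n hn) (tubeGamma n hn) :=
    ⟨fun z _ => PhiU_neg_PhiU u z hn0, fun z _ => by simpa using PhiU_neg_PhiU (-u) z hn0⟩
  refine ⟨hinv.bijOn (PhiU_mapsTo_tubeGamma n hn u) (PhiU_mapsTo_tubeGamma n hn (-u)), ?_⟩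
  exact PhiU_eq_self_of_apply_zero_eq_one u _ (by simp)
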